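/- Every edge of the Coxeter graph Γ is contained in exactly four of the 7-cycles of Γ. -/

import Mathlib

/-
Labelling a 7-cycle `H` through the edge `uv` by an isomorphism from `cycleGraph 7` that sends
`0 ↦ u` and `1 ↦ v` (always possible, since the dihedral symmetries of the 7-cycle act
transitively on its arcs) identifies `H` with an injective closed walk `u, v, x₂, …, x₆`; the
labelling is unique because each vertex of a cycle has only two neighbours on it. It therefore
suffices to count these walks, and a finite search finds exactly four of them for every edge of
the Coxeter graph.
-/

/-- Vertex set of the Coxeter graph: four concentric 7-tuples `u, v, t, z`. -/
abbrev CoxeterVertex := Fin 4 × ZMod 7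

/-- Base (asymmetric) adjacency relation for the Coxeter graph:
`u_x ~ u_{x+1}`, `v_x ~ v_{x+2}`, `t_x ~ t_{x+3}`, and `z_x ~ u_x, v_x, t_x`. -/
def coxeterRel : CoxeterVertex → CoxeterVertex → Prop := fun p q =>
  (p.1 = 0 ∧ q.1 = 0 ∧ q.2 = p.2 + 1) ∨
  (p.1 = 1 ∧ q.1 = 1 ∧ q.2 = p.2 + 2) ∨
  (p.1 = 2 ∧ q.1 = 2 ∧ q.2 = p.2 + 3) ∨
  (p.1 = 3 ∧ (q.1 = 0 ∨ q.1 = 1 ∨ q.1 = 2) ∧ q.2 = p.2)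

/-- The Coxeter graph on 28 vertices. -/
def coxeterGraph : SimpleGraph CoxeterVertex := SimpleGraph.fromRel coxeterRel

/-- A 7-cycle of a graph `G` is a subgraph of `G` isomorphic to the cycle graph
on 7 vertices. -/
def IsSevenCycle {V : Type*} {G : SimpleGraph V} (H : G.Subgraph) : Prop :=
  Nonempty (H.coe ≃g SimpleGraph.cycleGraph 7)

open SimpleGraph Function Finset

namespace SimpleGraph

variable {V : Type*} {G : SimpleGraph V} {n : ℕ}

lemma cycleGraph_adj_add_one (i : Fin (n + 2)) : (cycleGraph (n + 2)).Adj i (i + 1) :=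
  cycleGraph_adj.2 (Or.inr (add_sub_cancel_left i 1))

lemma exists_cycleGraph_iso_map_zero_one {a b : Fin (n + 2)}
    (hab : (cycleGraph (n + 2)).Adj a b) :
    ∃ σ : cycleGraph (n + 2) ≃g cycleGraph (n + 2), σ 0 = a ∧ σ 1 = b := by
  rcases cycleGraph_adj.1 hab with h | h
  · refine ⟨⟨Equiv.subLeft a, ?_⟩, sub_zero a, ?_⟩
    · intro i j
      simp only [Equiv.subLeft_apply, cycleGraph_adj, sub_sub_sub_cancel_left, or_comm]
    · show a - 1 = b
      rw [← h, sub_sub_cancel]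
  · refine ⟨⟨Equiv.addLeft a, ?_⟩, add_zero a, ?_⟩
    · intro i j
      simp only [Equiv.coe_addLeft, cycleGraph_adj, add_sub_add_left_eq_sub]
    · show a + 1 = b
      rw [← h, add_sub_cancel]

namespace Copy

variable {W W' : Type*} {A : SimpleGraph W} {A' : SimpleGraph W'}

lemma toSubgraph_comp_iso (f : Copy A G) (σ : A' ≃g A) :
    (f.comp σ.toCopy).toSubgraph = f.toSubgraph := by
  have hσ : (⊤ : A'.Subgraph).map σ.toCopy.toHom = ⊤ := by
    ext a b <;> simp
  show Subgraph.map (f.toHom.comp σ.toCopy.toHom) ⊤ = _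
  rw [Subgraph.map_comp, hσ]

lemma toSubgraph_adj_cycleGraph (f : Copy (cycleGraph (n + 2)) G) (i : Fin (n + 2)) (w : V) :
    f.toSubgraph.Adj (f i) w ↔ w = f (i - 1) ∨ w = f (i + 1) := by
  have hinj : ∀ a, f i = f a ↔ i = a := fun a => f.injective.eq_iff
  simp only [Subgraph.map_adj, Relation.Map, Subgraph.top_adj, ← mem_neighborSet,
    cycleGraph_neighborSet]
  simp [hinj, or_and_right, exists_or, eq_comm]

open Fin.NatCast in
lemma eq_of_toSubgraph_eq {f g : Copy (cycleGraph (n + 3)) G}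
    (h : f.toSubgraph = g.toSubgraph) (h0 : f 0 = g 0) (h1 : f 1 = g 1) : f = g := by
  have step : ∀ i, f i = g i → f (i + 1) = g (i + 1) → f (i + 1 + 1) = g (i + 1 + 1) := by
    intro i hi hi1
    have hadj : g.toSubgraph.Adj (g (i + 1)) (g (i + 1 + 1)) :=
      (toSubgraph_adj_cycleGraph g _ _).2 (Or.inr rfl)
    rw [← h, ← hi1, toSubgraph_adj_cycleGraph, add_sub_cancel_right, hi] at hadj
    -- `g (i + 1)` has only two neighbours on the cycle, and `g i` is the other one.
    refine (hadj.resolve_left fun h' => ?_).symm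
    have h2 := g.injective h'
    rw [add_assoc, add_eq_left] at h2
    simp [Fin.ext_iff, Fin.val_add, Nat.mod_eq_of_lt (show 2 < n + 3 by omega)] at h2
  have key : ∀ k : ℕ, f (k : Fin (n + 3)) = g k ∧ f (k + 1 : ℕ) = g (k + 1 : ℕ) := by
    intro k
    induction k with
    | zero => simpa using ⟨h0, h1⟩
    | succ k ih =>
      exact ⟨ih.2, by simpa using step _ (by simpa using ih.1) (by simpa using ih.2)⟩
  ext i
  simpa using (key i).1

end Copy

lemma isSevenCycle_iff_exists_copy {H : G.Subgraph} :
    IsSevenCycle H ↔ ∃ f : Copy (cycleGraph 7) G, f.toSubgraph = H := by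
  rw [← Set.mem_range, Copy.range_toSubgraph]
  exact ⟨fun ⟨e⟩ => ⟨e.symm⟩, fun ⟨e⟩ => ⟨e.symm⟩⟩

lemma setOf_isSevenCycle_adj_eq_image (u v : V) :
    {H : G.Subgraph | IsSevenCycle H ∧ H.Adj u v} =
      Copy.toSubgraph '' {f : Copy (cycleGraph 7) G | f 0 = u ∧ f 1 = v} := by
  ext H
  simp only [Set.mem_image, isSevenCycle_iff_exists_copy]
  constructor
  · rintro ⟨⟨f, rfl⟩, a, b, hab, rfl, rfl⟩
    obtain ⟨σ, hσ0, hσ1⟩ := exists_cycleGraph_iso_map_zero_one hab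
    exact ⟨f.comp σ.toCopy, ⟨by simp [hσ0], by simp [hσ1]⟩, f.toSubgraph_comp_iso σ⟩
  · rintro ⟨f, ⟨rfl, rfl⟩, rfl⟩
    exact ⟨⟨f, rfl⟩, 0, 1, cycleGraph_adj_add_one 0, rfl, rfl⟩

lemma range_coe_copy_cycleGraph :
    Set.range (fun f : Copy (cycleGraph (n + 2)) G => ⇑f) =
      {x | Injective x ∧ ∀ i, G.Adj (x i) (x (i + 1))} := by
  ext x
  constructor
  · rintro ⟨f, rfl⟩
    exact ⟨f.injective, fun i => f.toHom.map_adj (cycleGraph_adj_add_one i)⟩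
  · rintro ⟨hinj, hadj⟩
    have hom : ∀ {i j}, (cycleGraph (n + 2)).Adj i j → G.Adj (x i) (x j) := by
      intro i j hij
      rcases cycleGraph_adj.1 hij with h | h
      · rw [sub_eq_iff_eq_add'.1 h]
        exact (hadj j).symm
      · rw [sub_eq_iff_eq_add'.1 h]
        exact hadj i
    exact ⟨⟨⟨x, hom⟩, hinj⟩, rfl⟩

lemma ncard_setOf_isSevenCycle_adj (u v : V) :
    {H : G.Subgraph | IsSevenCycle H ∧ H.Adj u v}.ncard =
      {x : Fin 7 → V | x 0 = u ∧ x 1 = v ∧ Injective x ∧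
        ∀ i, G.Adj (x i) (x (i + 1))}.ncard := by
  have hinjOn : Set.InjOn Copy.toSubgraph {f : Copy (cycleGraph 7) G | f 0 = u ∧ f 1 = v} :=
    fun f hf g hg h => Copy.eq_of_toSubgraph_eq (n := 4) h (hf.1.trans hg.1.symm)
      (hf.2.trans hg.2.symm)
  rw [setOf_isSevenCycle_adj_eq_image, hinjOn.ncard_image,
    ← Set.ncard_image_of_injective _ DFunLike.coe_injective]
  congr 1
  rw [← Set.preimage_ofPred_eq (p := fun x : Fin 7 → V => x 0 = u ∧ x 1 = v),
    Set.image_preimage_eq_range_inter, range_coe_copy_cycleGraph]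
  ext x
  simp only [Set.mem_inter_iff, Set.mem_ofPred_eq]
  tauto

section Enumeration

variable [Fintype V] [DecidableEq V] [DecidableRel G.Adj]

variable (G) in
/-- Built by following neighbours rather than by filtering all `Fin 7 → V`, so that `decide` can
evaluate it. -/
def sevenCycleTuples (u v : V) : Finset (Fin 7 → V) :=
  (univ.filter (G.Adj v)).biUnion fun a => (univ.filter (G.Adj a)).biUnion fun b =>
    (univ.filter (G.Adj b)).biUnion fun c => (univ.filter (G.Adj c)).biUnion fun d =>
      ((univ.filter (G.Adj d)).filter fun e => G.Adj e u ∧ [u, v, a, b, c, d, e].Nodup).image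
        fun e => ![u, v, a, b, c, d, e]

lemma coe_sevenCycleTuples {u v : V} (huv : G.Adj u v) :
    (G.sevenCycleTuples u v : Set (Fin 7 → V)) =
      {x | x 0 = u ∧ x 1 = v ∧ Injective x ∧ ∀ i, G.Adj (x i) (x (i + 1))} := by
  have hnodup : ∀ x : Fin 7 → V, [x 0, x 1, x 2, x 3, x 4, x 5, x 6].Nodup ↔ Injective x :=
    fun x => by rw [← List.nodup_ofFn]; simp [List.ofFn_succ]
  ext x
  simp only [sevenCycleTuples, coe_biUnion, coe_image, coe_filter, mem_filter, mem_univ, true_and,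
    Set.mem_iUnion, Set.mem_image, Set.mem_ofPred_eq]
  constructor
  · rintro ⟨a, hva, b, hab, c, hbc, d, hcd, e, ⟨hde, heu, hnd⟩, rfl⟩
    refine ⟨rfl, rfl, (hnodup _).1 hnd, fun i => ?_⟩
    fin_cases i
    exacts [huv, hva, hab, hbc, hcd, hde, heu]
  · rintro ⟨rfl, rfl, hinj, hadj⟩
    have hx : ![x 0, x 1, x 2, x 3, x 4, x 5, x 6] = x := by
      ext i; fin_cases i <;> rfl
    exact ⟨x 2, hadj 1, x 3, hadj 2, x 4, hadj 3, x 5, hadj 4, x 6,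
      ⟨hadj 5, hadj 6, (hnodup x).2 hinj⟩, hx⟩

end Enumeration

end SimpleGraph

instance : DecidableRel coxeterRel := fun _ _ => by
  unfold coxeterRel; infer_instance

instance : DecidableRel coxeterGraph.Adj := fun p q =>
  decidable_of_iff' _ (fromRel_adj coxeterRel p q)

lemma card_sevenCycleTuples_coxeterGraph :
    ∀ u v, coxeterGraph.Adj u v → #(coxeterGraph.sevenCycleTuples u v) = 4 := by
  decide

/-- Every edge of the Coxeter graph lies in exactly four of its 7-cycles. -/
theorem coxeterGraph_edge_in_exactly_four_sevenCycles
    (u v : CoxeterVertex) (huv : coxeterGraph.Adj u v) :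
    {H : coxeterGraph.Subgraph | IsSevenCycle H ∧ H.Adj u v}.ncard = 4 := by
  rw [ncard_setOf_isSevenCycle_adj, ← coe_sevenCycleTuples huv, Set.ncard_coe_finset,
    card_sevenCycleTuples_coxeterGraph u v huv]
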